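/- arXiv:2005.05161 — 2 statements merged into one kernel-verified Lean document; each statement's English description precedes it below -/
import Mathlib

section
/- The graph Γ₇ has exactly two graph automorphisms: the identity, and the involution which fixes v and swaps aᵢ with bᵢ for i = 1, 2, 3. -/
/-- The vertices of the graph `Γ₇`. -/
inductive V7 : Type
  | v | a1 | a2 | a3 | b1 | b2 | b3
  deriving DecidableEq

open V7

/-- The graph `Γ₇`: the hexagonal cycle `a₁a₂a₃b₁b₂b₃a₁`, the chords `a₂b₂` and `a₃b₃`,
and the four edges `va₁`, `vb₁`, `va₂`, `vb₂`. -/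
def Gamma7 : SimpleGraph V7 :=
  SimpleGraph.fromEdgeSet
    {s(a1, a2), s(a2, a3), s(a3, b1), s(b1, b2), s(b2, b3), s(b3, a1),
     s(a2, b2), s(a3, b3),
     s(v, a1), s(v, b1), s(v, a2), s(v, b2)}

/-- The involution of the vertex set of `Γ₇` which fixes `v` and swaps `aᵢ` with `bᵢ`
for `i = 1, 2, 3`. -/
def sigma7 : V7 → V7
  | v => v
  | a1 => b1
  | a2 => b2
  | a3 => b3
  | b1 => a1
  | b2 => a2
  | b3 => a3

/-!
In `Γ₇` the vertex `v` lies on three triangles, `a₂` and `b₂` on two each, and every other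
vertex on at most one. An automorphism therefore fixes `v` and maps `a₂` into `{a₂, b₂}`;
composing with the swap we may assume it fixes `a₂` as well. An automorphism also fixes every
vertex `z` whose closed neighbourhood meets its set of fixed points in a pattern shared by no
other vertex: for the fixed set `{v, a₂}` this pins `a₃, b₁, b₃`, and for these five vertices
it pins `a₁, b₂`.
-/

namespace SimpleGraph

variable {V W : Type*} {G : SimpleGraph V} {G' : SimpleGraph W}

/-- Twice the number of triangles through `x`: each triangle is counted in both orientations. -/
def triangleCount [Fintype V] (G : SimpleGraph V) [DecidableRel G.Adj] (x : V) : ℕ :=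
  Fintype.card {p : V × V // G.Adj x p.1 ∧ G.Adj p.1 p.2 ∧ G.Adj p.2 x}

theorem Iso.triangleCount_apply [Fintype V] [Fintype W] [DecidableRel G.Adj]
    [DecidableRel G'.Adj] (φ : G ≃g G') (x : V) :
    G'.triangleCount (φ x) = G.triangleCount x :=
  Fintype.card_congr ((φ.toEquiv.prodCongr φ.toEquiv).subtypeEquiv fun _ => by
    simp only [Equiv.prodCongr_apply, Prod.map_fst, Prod.map_snd, RelIso.coe_fn_toEquiv,
      Iso.map_adj_iff]).symm

theorem Iso.apply_eq_self_of_forall_eq_or_adj_iff (φ : G ≃g G) {S : Finset V}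
    (hS : ∀ s ∈ S, φ s = s) {z : V}
    (hz : ∀ w, (∀ s ∈ S, w = s ∨ G.Adj w s ↔ z = s ∨ G.Adj z s) → w = z) : φ z = z :=
  hz (φ z) fun s hs => by
    simpa only [hS s hs] using
      or_congr (φ.apply_eq_iff_eq (x := z) (y := s)) (φ.map_adj_iff (v := z) (w := s))

end SimpleGraph

open SimpleGraph

instance : Fintype V7 :=
  ⟨⟨{v, a1, a2, a3, b1, b2, b3}, by decide⟩, fun x => by cases x <;> decide⟩

instance : DecidableRel Gamma7.Adj := by
  unfold Gamma7; infer_instance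

theorem eq_v_of_triangleCount_gamma7_eq {x : V7} :
    Gamma7.triangleCount x = Gamma7.triangleCount v → x = v := by
  revert x; decide

theorem eq_a2_or_eq_b2_of_triangleCount_gamma7_eq {x : V7} :
    Gamma7.triangleCount x = Gamma7.triangleCount a2 → x = a2 ∨ x = b2 := by
  revert x; decide

theorem sigma7_involutive : Function.Involutive sigma7 := by
  intro x; cases x <;> rfl

def sigma7Iso : Gamma7 ≃g Gamma7 where
  toEquiv := sigma7_involutive.toPerm
  map_rel_iff' := by decide

theorem coe_eq_id_of_apply_v_of_apply_a2 (φ : Gamma7 ≃g Gamma7) (hv : φ v = v)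
    (ha2 : φ a2 = a2) : ⇑φ = id := by
  have h₁ : ∀ z ∈ ({a3, b1, b3} : Finset V7), φ z = z := fun z hz =>
    φ.apply_eq_self_of_forall_eq_or_adj_iff (S := {v, a2}) (by simp [hv, ha2])
      (by revert z; decide)
  have h₂ : ∀ z ∈ ({a1, b2} : Finset V7), φ z = z := fun z hz =>
    φ.apply_eq_self_of_forall_eq_or_adj_iff (S := {v, a2, a3, b1, b3})
      (by simp_all) (by revert z; decide)
  funext z
  cases z <;> simp_all

/-- The graph `Γ₇` has exactly two graph automorphisms: the identity, and the involution
which fixes `v` and swaps `aᵢ` with `bᵢ` for `i = 1, 2, 3`. -/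
theorem Gamma7_has_exactly_two_automorphisms :
    (∃ ψ : Gamma7 ≃g Gamma7, ⇑ψ = sigma7) ∧
    sigma7 ≠ id ∧
    (∀ φ : Gamma7 ≃g Gamma7, ⇑φ = id ∨ ⇑φ = sigma7) := by
  refine ⟨⟨sigma7Iso, rfl⟩, fun h => absurd (congrFun h a1) (by decide), fun φ => ?_⟩
  have hv : φ v = v := eq_v_of_triangleCount_gamma7_eq (φ.triangleCount_apply v)
  rcases eq_a2_or_eq_b2_of_triangleCount_gamma7_eq (φ.triangleCount_apply a2) with ha2 | ha2
  · exact Or.inl (coe_eq_id_of_apply_v_of_apply_a2 φ hv ha2)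
  · have hσφ := coe_eq_id_of_apply_v_of_apply_a2 (φ.trans sigma7Iso)
      (show sigma7 (φ v) = v by rw [hv]; rfl) (show sigma7 (φ a2) = a2 by rw [ha2]; rfl)
    exact Or.inr <| funext fun x =>
      sigma7_involutive.eq_iff.mp (congrFun hσφ x : sigma7 (φ x) = x)
end

section
/- Up to isomorphism, the unique connected simple graph with 6 vertices and 10 edges that has K₅ or K₃,₃ as a minor is the graph obtained from K₃,₃ by adding one extra edge. -/
/-- `H` is a minor of `G`: `H` can be obtained from a subgraph of `G` by contracting edges.
Equivalently (branch-set formulation): there is a family of nonempty, pairwise disjoint,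
connected subsets of the vertices of `G`, indexed by the vertices of `H`, such that whenever
two vertices are adjacent in `H` there is an edge of `G` between the corresponding sets. -/
def IsMinor {W V : Type} (H : SimpleGraph W) (G : SimpleGraph V) : Prop :=
  ∃ B : W → Set V,
    (∀ w, (B w).Nonempty) ∧
    (∀ w, (G.induce (B w)).Connected) ∧
    (∀ w₁ w₂, w₁ ≠ w₂ → Disjoint (B w₁) (B w₂)) ∧
    (∀ w₁ w₂, H.Adj w₁ w₂ → ∃ u ∈ B w₁, ∃ x ∈ B w₂, G.Adj u x)

/-- The complete bipartite graph `K₃,₃`. -/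
def K33 : SimpleGraph (Fin 3 ⊕ Fin 3) := completeBipartiteGraph (Fin 3) (Fin 3)

/-- The complete graph `K₅`. -/
def K5 : SimpleGraph (Fin 5) := ⊤

/-- The graph obtained from `K₃,₃` by adding one extra edge (joining the two vertices
`Sum.inl 0` and `Sum.inl 1` in the same part; any choice gives isomorphic graphs). -/
def K33plus : SimpleGraph (Fin 3 ⊕ Fin 3) :=
  SimpleGraph.fromEdgeSet (insert s(Sum.inl 0, Sum.inl 1) K33.edgeSet)


/-!
Let `G` be connected with six vertices and ten edges. In a `K₅`-model in `G`, the ten edges of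
`K₅` are realised by ten distinct edges of `G` joining distinct branch sets. With five branch sets
and six vertices, either some branch set has two vertices, and being connected contains an edge, or
some vertex lies in no branch set and, `G` being connected, lies on an edge. Either way `G` has an
eleventh edge, so it has no `K₅` minor.

In a `K₃,₃`-model the six branch sets must be the six singletons, so `G` is `K₃,₃` plus one edge
joining two vertices on the same side. The automorphisms of `K₃,₃` act transitively on such pairs,
so `G` is isomorphic to `K33plus`.
-/

open Function SimpleGraph

section BranchSets

variable {W V : Type} {H : SimpleGraph W} {G : SimpleGraph V} {B : W → Set V}

lemma eq_of_mem_of_pairwise_disjoint (hdisj : Pairwise (Disjoint on B)) {v : V} {w₁ w₂ : W}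
    (h₁ : v ∈ B w₁) (h₂ : v ∈ B w₂) : w₁ = w₂ := by
  by_contra hne
  exact Set.disjoint_left.1 (hdisj hne) h₁ h₂

lemma exists_index_of_pairwise_disjoint [Nonempty W] (hdisj : Pairwise (Disjoint on B)) :
    ∃ idx : V → W, ∀ w, ∀ v ∈ B w, idx v = w := by
  classical
  refine ⟨fun v => if h : ∃ w, v ∈ B w then h.choose else Classical.arbitrary W, fun w v hv => ?_⟩
  have h : ∃ w, v ∈ B w := ⟨w, hv⟩
  dsimp only
  rw [dif_pos h]
  exact eq_of_mem_of_pairwise_disjoint hdisj h.choose_spec hv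

def IsCrossingEdge (B : W → Set V) (e : Sym2 V) : Prop :=
  ∃ w₁ w₂, w₁ ≠ w₂ ∧ ∃ u ∈ B w₁, ∃ x ∈ B w₂, s(u, x) = e

lemma edgeSet_ncard_lt_of_not_isCrossingEdge [Finite V] [Nonempty W]
    (hdisj : Pairwise (Disjoint on B))
    (hadj : ∀ w₁ w₂, H.Adj w₁ w₂ → ∃ u ∈ B w₁, ∃ x ∈ B w₂, G.Adj u x)
    {e₀ : Sym2 V} (he₀ : e₀ ∈ G.edgeSet)
    (hnot : ¬IsCrossingEdge B e₀) :
    H.edgeSet.ncard < G.edgeSet.ncard := by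
  obtain ⟨idx, hidx⟩ := exists_index_of_pairwise_disjoint hdisj
  have hsub : H.edgeSet ⊆ Sym2.map idx '' (G.edgeSet \ {e₀}) := by
    rintro ⟨w₁, w₂⟩ h
    obtain ⟨u, hu, x, hx, hux⟩ := hadj w₁ w₂ h
    refine ⟨s(u, x), ⟨hux, fun heq => hnot ⟨w₁, w₂, h.ne, u, hu, x, hx, heq⟩⟩, ?_⟩
    rw [Sym2.map_mk, hidx _ _ hu, hidx _ _ hx]
  calc H.edgeSet.ncard ≤ (G.edgeSet \ {e₀}).ncard :=
        (Set.ncard_le_ncard hsub).trans (Set.ncard_image_le)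
    _ < G.edgeSet.ncard := Set.ncard_sdiff_singleton_lt_of_mem he₀

lemma exists_edge_not_isCrossingEdge [Finite W] [Nonempty W] (hG : G.Connected)
    (hne : ∀ w, (B w).Nonempty) (hconn : ∀ w, (G.induce (B w)).Connected)
    (hdisj : Pairwise (Disjoint on B)) (hcard : Nat.card W < Nat.card V) :
    ∃ e₀ ∈ G.edgeSet, ¬IsCrossingEdge B e₀ := by
  by_cases hcov : ∀ v, ∃ w, v ∈ B w
  · choose idx hidx using hcov
    obtain ⟨v, v', hvv', hidx_eq⟩ : ∃ v v', v ≠ v' ∧ idx v = idx v' := by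
      by_contra! hinj
      exact (Nat.card_le_card_of_injective idx fun v v' h => by_contra (hinj v v' · h)).not_gt hcard
    have : Nontrivial (B (idx v)) :=
      ⟨⟨v, hidx v⟩, ⟨v', hidx_eq ▸ hidx v'⟩, by simpa using hvv'⟩
    obtain ⟨⟨y, hy⟩, hvy⟩ := (hconn (idx v)).preconnected.exists_adj_of_nontrivial ⟨v, hidx v⟩
    have hin : ∀ w, ∀ z ∈ B w, z = v ∨ z = y → w = idx v := by
      rintro w z hz (rfl | rfl)
      exacts [eq_of_mem_of_pairwise_disjoint hdisj hz (hidx z),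
        eq_of_mem_of_pairwise_disjoint hdisj hz hy]
    refine ⟨s(v, y), hvy, fun ⟨w₁, w₂, hw, u, hu, x, hx, heq⟩ => hw ?_⟩
    rcases Sym2.eq_iff.1 heq with ⟨hu', hx'⟩ | ⟨hu', hx'⟩
    · exact (hin w₁ u hu (.inl hu')).trans (hin w₂ x hx (.inr hx')).symm
    · exact (hin w₁ u hu (.inr hu')).trans (hin w₂ x hx (.inl hx')).symm
  · push Not at hcov
    obtain ⟨v, hv⟩ := hcov
    obtain ⟨u, hu⟩ := hne (Classical.arbitrary W)
    have : Nontrivial V := ⟨v, u, fun h => hv _ (h ▸ hu)⟩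
    obtain ⟨y, hvy⟩ := hG.preconnected.exists_adj_of_nontrivial v
    refine ⟨s(v, y), hvy, fun ⟨w₁, w₂, _, u, hu, x, hx, heq⟩ => ?_⟩
    rcases Sym2.eq_iff.1 heq with ⟨rfl, -⟩ | ⟨-, rfl⟩
    exacts [hv w₁ hu, hv w₂ hx]

end BranchSets

section Minors

variable {W V : Type} {H : SimpleGraph W} {G : SimpleGraph V}

theorem SimpleGraph.IsContained.isMinor (h : H ⊑ G) : IsMinor H G := by
  obtain ⟨f⟩ := h
  exact ⟨fun w => {f.toHom w}, fun _ => Set.singleton_nonempty _, fun _ => .of_subsingleton,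
    fun _ _ hne => Set.disjoint_singleton.2 (f.injective.ne hne),
    fun a b hab => ⟨_, rfl, _, rfl, f.toHom.map_adj hab⟩⟩

theorem IsMinor.edgeSet_ncard_lt [Finite W] [Nonempty W] (h : IsMinor H G) (hG : G.Connected)
    (hcard : Nat.card W < Nat.card V) : H.edgeSet.ncard < G.edgeSet.ncard := by
  have : Finite V := Nat.finite_of_card_ne_zero (by omega)
  obtain ⟨B, hne, hconn, hdisj, hadj⟩ := h
  obtain ⟨e₀, he₀, hnot⟩ := exists_edge_not_isCrossingEdge hG hne hconn hdisj hcard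
  exact edgeSet_ncard_lt_of_not_isCrossingEdge hdisj hadj he₀ hnot

theorem IsMinor.exists_equiv_le_comap [Finite V] (h : IsMinor H G)
    (hcard : Nat.card V ≤ Nat.card W) : ∃ e : W ≃ V, H ≤ G.comap e := by
  obtain ⟨B, hne, -, hdisj, hadj⟩ := h
  choose f hf using hne
  have hinj : f.Injective := fun w₁ w₂ h =>
    eq_of_mem_of_pairwise_disjoint hdisj (hf w₁) (h ▸ hf w₂)
  have hbij := hinj.bijective_of_nat_card_le hcard
  have hB : ∀ w, ∀ v ∈ B w, v = f w := by
    intro w v hv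
    obtain ⟨w', rfl⟩ := hbij.2 v
    rw [eq_of_mem_of_pairwise_disjoint hdisj hv (hf w')]
  refine ⟨Equiv.ofBijective f hbij, fun a b hab => ?_⟩
  obtain ⟨u, hu, x, hx, hux⟩ := hadj a b hab
  rwa [hB a u hu, hB b x hx] at hux

end Minors

namespace SimpleGraph

variable {V W : Type*} {G : SimpleGraph V} {G' : SimpleGraph W}

theorem Iso.edgeSet_ncard_eq (f : G ≃g G') : G.edgeSet.ncard = G'.edgeSet.ncard :=
  Nat.card_congr f.mapEdgeSet

theorem edgeSet_ncard_sup_edge [Finite V] {s t : V} (hn : ¬G.Adj s t) (h : s ≠ t) :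
    (G ⊔ edge s t).edgeSet.ncard = G.edgeSet.ncard + 1 := by
  rw [edgeSet_sup, edgeSet_edge_of_ne h, Set.union_singleton,
    Set.ncard_insert_of_notMem (mt G.mem_edgeSet.1 hn)]

theorem exists_eq_sup_edge_of_le [Finite V] {H : SimpleGraph V} (hle : H ≤ G)
    (hcard : G.edgeSet.ncard = H.edgeSet.ncard + 1) :
    ∃ a b, a ≠ b ∧ ¬H.Adj a b ∧ G = H ⊔ edge a b := by
  obtain ⟨e, he, heH⟩ :=
    Set.exists_mem_notMem_of_ncard_lt_ncard (by omega : H.edgeSet.ncard < G.edgeSet.ncard)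
  induction e using Sym2.ind with | _ a b => ?_
  refine ⟨a, b, G.ne_of_adj he, heH, ?_⟩
  have hsup : H ⊔ edge a b ≤ G := sup_le hle ((edge_le_iff _).2 (.inr he))
  refine (edgeSet_inj.1 (Set.eq_of_subset_of_ncard_le (edgeSet_subset_edgeSet.2 hsup) ?_)).symm
  rw [edgeSet_ncard_sup_edge heH (G.ne_of_adj he), hcard]

def Iso.supEdge {H : SimpleGraph V} {H' : SimpleGraph W} (σ : H ≃g H') (a b : V) :
    H ⊔ edge a b ≃g H' ⊔ edge (σ a) (σ b) where
  toEquiv := σ.toEquiv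
  map_rel_iff' := by simp [edge_adj, σ.injective.eq_iff, Iso.map_adj_iff]

def completeBipartiteGraphComm (α β : Type*) :
    completeBipartiteGraph α β ≃g completeBipartiteGraph β α where
  toEquiv := Equiv.sumComm α β
  map_rel_iff' := by simp [or_comm]

theorem completeBipartiteGraph_connected [Nonempty V] [Nonempty W] :
    (completeBipartiteGraph V W).Connected := by
  rw [connected_iff_exists_forall_reachable]
  obtain ⟨v₀⟩ := ‹Nonempty V›
  obtain ⟨w₀⟩ := ‹Nonempty W›
  have hlr : ∀ v w, (completeBipartiteGraph V W).Reachable (.inl v) (.inr w) :=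
    fun v w => Adj.reachable (by simp)
  refine ⟨.inl v₀, ?_⟩
  rintro (v | w)
  exacts [(hlr v₀ w₀).trans (hlr v w₀).symm, hlr v₀ w]

end SimpleGraph

lemma Fin.exists_perm_three_apply_eq_zero_one {x y : Fin 3} (hxy : x ≠ y) :
    ∃ p : Equiv.Perm (Fin 3), p x = 0 ∧ p y = 1 := by
  revert x y
  decide

lemma exists_iso_K33_apply_eq_of_not_adj {a b : Fin 3 ⊕ Fin 3} (hab : a ≠ b) (h : ¬K33.Adj a b) :
    ∃ σ : K33 ≃g K33, σ a = .inl 0 ∧ σ b = .inl 1 := by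
  rcases a with x | x <;> rcases b with y | y
  · obtain ⟨p, hx, hy⟩ := Fin.exists_perm_three_apply_eq_zero_one (ne_of_apply_ne Sum.inl hab)
    exact ⟨completeBipartiteGraphCongr p (.refl _), congrArg Sum.inl hx, congrArg Sum.inl hy⟩
  · exact absurd (by simp [K33]) h
  · exact absurd (by simp [K33]) h
  · obtain ⟨p, hx, hy⟩ := Fin.exists_perm_three_apply_eq_zero_one (ne_of_apply_ne Sum.inr hab)
    exact ⟨(completeBipartiteGraphCongr (.refl _) p).trans (completeBipartiteGraphComm _ _),
      congrArg Sum.inl hx, congrArg Sum.inl hy⟩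

lemma K33plus_eq_sup_edge : K33plus = K33 ⊔ edge (.inl 0) (.inl 1) := by
  ext a b
  have := K33.ne_of_adj (a := a) (b := b)
  simp only [K33plus, fromEdgeSet_adj, Set.mem_insert_iff, Sym2.eq_iff, mem_edgeSet, sup_adj,
    edge_adj]
  tauto

lemma nonempty_iso_K33plus_of_not_adj {a b : Fin 3 ⊕ Fin 3} (hab : a ≠ b) (h : ¬K33.Adj a b) :
    Nonempty (K33 ⊔ edge a b ≃g K33plus) := by
  obtain ⟨σ, hσa, hσb⟩ := exists_iso_K33_apply_eq_of_not_adj hab h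
  rw [K33plus_eq_sup_edge, ← hσa, ← hσb]
  exact ⟨σ.supEdge a b⟩

lemma K33_edgeSet_ncard : K33.edgeSet.ncard = 9 := by
  simp [K33, Set.ncard_def, encard_edgeSet_completeBipartiteGraph]

lemma K5_edgeSet_ncard : K5.edgeSet.ncard = 10 := by
  rw [K5, ← coe_edgeFinset, Set.ncard_coe_finset, card_edgeFinset_top_eq_card_choose_two]
  rfl

lemma K33_le_K33plus : K33 ≤ K33plus := K33plus_eq_sup_edge ▸ le_sup_left

lemma K33plus_connected : K33plus.Connected :=
  completeBipartiteGraph_connected.mono K33_le_K33plus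

lemma K33plus_edgeSet_ncard : K33plus.edgeSet.ncard = 10 := by
  rw [K33plus_eq_sup_edge, edgeSet_ncard_sup_edge (by simp [K33]) (by simp), K33_edgeSet_ncard]

/-- Up to isomorphism, the unique connected simple graph with 6 vertices and 10 edges that
has `K₅` or `K₃,₃` as a minor is the graph obtained from `K₃,₃` by adding one extra edge. -/
theorem unique_nonplanar_graph_with_6_vertices_10_edges :
    (K33plus.Connected ∧ K33plus.edgeSet.ncard = 10 ∧
      (IsMinor K5 K33plus ∨ IsMinor K33 K33plus)) ∧
    (∀ (V : Type) [Fintype V], Fintype.card V = 6 →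
      ∀ G : SimpleGraph V, G.Connected → G.edgeSet.ncard = 10 →
        (IsMinor K5 G ∨ IsMinor K33 G) → Nonempty (G ≃g K33plus)) := by
  refine ⟨⟨K33plus_connected, K33plus_edgeSet_ncard,
    .inr (IsContained.of_le K33_le_K33plus).isMinor⟩, ?_⟩
  intro V _ h6 G hG h10 hminor
  rcases hminor with hK5 | hK33
  · have := hK5.edgeSet_ncard_lt hG (by simp [h6])
    rw [K5_edgeSet_ncard, h10] at this
    exact absurd this (lt_irrefl _)
  · obtain ⟨e, he⟩ := hK33.exists_equiv_le_comap (by simp [h6])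
    have hcard : (G.comap e).edgeSet.ncard = K33.edgeSet.ncard + 1 := by
      rw [(Iso.comap e G).edgeSet_ncard_eq, h10, K33_edgeSet_ncard]
    obtain ⟨a, b, hab, hnadj, hG'⟩ := exists_eq_sup_edge_of_le he hcard
    obtain ⟨σ⟩ := nonempty_iso_K33plus_of_not_adj hab hnadj
    exact ⟨(Iso.comap e G).symm.trans (hG' ▸ σ)⟩
end
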